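/- arXiv:1701.06904 — 3 statements merged into one kernel-verified Lean document; each statement's English description precedes it below -/
import Mathlib

section
/- Let Y be a real random variable with distribution function F, and define G(u) = E[exp(-u e^{Y})] for u > 0. Assume E[e^{-ξ Y}] < ∞ for Re ξ = δ > 0 and that ∫_ℝ e^{-δ y} F(y) dy converges. Then for ξ with Re ξ = δ, ∫_ℝ e^{-ξ y} F(y) dy = (1/Γ(ξ+1)) ∫_0^∞ u^{ξ-1} G(u) du. -/
/-!
Both sides equal an explicit multiple of `E[e^{-ξY}]`. Writing `F(y) = E[1_{Y ≤ y}]` and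
integrating in `y` first, `∫_{Y}^∞ e^{-ξy} dy = e^{-ξY}/ξ` turns the left side into
`E[e^{-ξY}]/ξ`; integrating in `u` first, `∫_0^∞ u^{ξ-1} e^{-u e^Y} du = Γ(ξ) e^{-ξY}` turns the
right integral into `Γ(ξ) E[e^{-ξY}]`, and `Γ(ξ+1) = ξ Γ(ξ)`. By Tonelli, the two interchanges of
integrals are justified by the integrability of `e^{-δy} F(y)` and of `e^{-δY}` respectively.
-/

open MeasureTheory Set

open scoped Complex Real

lemma norm_cexp_neg_mul_ofReal (ξ : ℂ) (y : ℝ) : ‖cexp (-ξ * y)‖ = rexp (-ξ.re * y) := by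
  simp [Complex.norm_exp, Complex.mul_re]

lemma integral_Ici_cexp_neg_mul {ξ : ℂ} (hξ : 0 < ξ.re) (a : ℝ) :
    ∫ y in Ici a, cexp (-ξ * y) = cexp (-ξ * a) / ξ := by
  rw [integral_Ici_eq_integral_Ioi, integral_exp_mul_complex_Ioi (by simpa using hξ),
    neg_div_neg_eq]

lemma integral_cexp_neg_mul_mul_measureReal_le {Ω : Type*} [MeasurableSpace Ω] {μ : Measure Ω}
    [IsFiniteMeasure μ] {Y : Ω → ℝ} (hY : Measurable Y) {ξ : ℂ} (hξ : 0 < ξ.re)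
    (hF : Integrable (fun y : ℝ => rexp (-ξ.re * y) * (μ {ω | Y ω ≤ y}).toReal)) :
    ∫ y : ℝ, cexp (-ξ * y) * ((μ {ω | Y ω ≤ y}).toReal : ℂ) =
      (∫ ω, cexp (-ξ * Y ω) ∂μ) / ξ := by
  set f : ℝ → Ω → ℂ := fun y ω => {ω | Y ω ≤ y}.indicator (fun _ => cexp (-ξ * y)) ω
  have hmeas : ∀ y : ℝ, MeasurableSet {ω | Y ω ≤ y} := fun y => hY measurableSet_Iic
  have hf_Ω : ∀ y : ℝ, ∫ ω, f y ω ∂μ = cexp (-ξ * y) * ((μ {ω | Y ω ≤ y}).toReal : ℂ) := by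
    intro y
    rw [integral_indicator_const _ (hmeas y), Complex.real_smul, mul_comm]
    rfl
  have hf_ℝ : ∀ ω, ∫ y : ℝ, f y ω = cexp (-ξ * Y ω) / ξ := by
    intro ω
    rw [← integral_Ici_cexp_neg_mul hξ, ← integral_indicator measurableSet_Ici]
    rfl
  have hf_int : Integrable (Function.uncurry f) (volume.prod μ) := by
    have hf_meas : AEStronglyMeasurable (Function.uncurry f) (volume.prod μ) :=
      (Measurable.indicator (by fun_prop)
        (measurableSet_le (hY.comp measurable_snd) measurable_fst)).aestronglyMeasurable
    have hf_y : ∀ y, Integrable (f y) μ := fun y => (integrable_const _).indicator (hmeas y)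
    refine (integrable_prod_iff hf_meas).2 ⟨.of_forall hf_y, ?_⟩
    refine hF.congr (.of_forall fun y => ?_)
    simp only [Function.uncurry_apply_pair, f, norm_indicator_eq_indicator_norm]
    rw [integral_indicator_const _ (hmeas y), norm_cexp_neg_mul_ofReal, smul_eq_mul, mul_comm]
    rfl
  simp_rw [← hf_Ω, integral_integral_swap hf_int, hf_ℝ, integral_div]

lemma norm_cpow_mul_cexp_neg_mul {u : ℝ} (hu : 0 < u) (s : ℂ) (b : ℝ) :
    ‖(u : ℂ) ^ (s - 1) * cexp (-(b * u))‖ = u ^ (s.re - 1) * rexp (-(b * u)) := by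
  rw [norm_mul, Complex.norm_cpow_eq_rpow_re_of_pos hu, ← Complex.ofReal_mul,
    ← Complex.ofReal_neg, Complex.norm_exp_ofReal, Complex.sub_re, Complex.one_re]

lemma integral_Ioi_cpow_mul_cexp_neg_exp_mul {ξ : ℂ} (hξ : 0 < ξ.re) (y : ℝ) :
    ∫ u in Ioi (0 : ℝ), (u : ℂ) ^ (ξ - 1) * cexp (-(rexp y * u)) =
      cexp (-ξ * y) * Complex.Gamma ξ := by
  have hinv : (1 / rexp y : ℂ) = rexp (-y) := by push_cast [Real.exp_neg]; ring
  rw [Complex.integral_cpow_mul_exp_neg_mul_Ioi hξ (Real.exp_pos y), hinv,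
    Complex.cpow_def_of_ne_zero (by exact_mod_cast (Real.exp_pos _).ne'),
    ← Complex.ofReal_log (Real.exp_pos _).le, Real.log_exp, mul_comm]
  push_cast
  ring_nf

lemma integral_Ioi_rpow_mul_exp_neg_exp_mul {s : ℝ} (hs : 0 < s) (y : ℝ) :
    ∫ u in Ioi (0 : ℝ), u ^ (s - 1) * rexp (-(rexp y * u)) = rexp (-s * y) * Real.Gamma s := by
  rw [Real.integral_rpow_mul_exp_neg_mul_Ioi hs (Real.exp_pos y), one_div, ← Real.exp_neg,
    ← Real.exp_mul, mul_comm (-y), neg_mul_comm]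

lemma integrableOn_rpow_mul_exp_neg_mul {s b : ℝ} (hs : 0 < s) (hb : 0 < b) :
    IntegrableOn (fun u : ℝ => u ^ (s - 1) * rexp (-(b * u))) (Ioi 0) := by
  simpa using integrableOn_rpow_mul_exp_neg_mul_rpow (by linarith : (-1 : ℝ) < s - 1) one_pos hb

lemma integral_Ioi_cpow_mul_integral_exp_neg_mul_exp {Ω : Type*} [MeasurableSpace Ω]
    {μ : Measure Ω} [SFinite μ] {Y : Ω → ℝ} (hY : Measurable Y) {ξ : ℂ} (hξ : 0 < ξ.re)
    (hint : Integrable (fun ω => rexp (-ξ.re * Y ω)) μ) :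
    ∫ u in Ioi (0 : ℝ), (u : ℂ) ^ (ξ - 1) * ((∫ ω, rexp (-u * rexp (Y ω)) ∂μ : ℝ) : ℂ) =
      (∫ ω, cexp (-ξ * Y ω) ∂μ) * Complex.Gamma ξ := by
  set g : ℝ → Ω → ℂ := fun u ω => (u : ℂ) ^ (ξ - 1) * cexp (-(rexp (Y ω) * u))
  have hg_norm : ∀ ω, ∀ u ∈ Ioi (0 : ℝ),
      ‖g u ω‖ = u ^ (ξ.re - 1) * rexp (-(rexp (Y ω) * u)) := fun ω u hu =>
    norm_cpow_mul_cexp_neg_mul hu ξ _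
  have hg_Ω : ∀ u : ℝ,
      (u : ℂ) ^ (ξ - 1) * ((∫ ω, rexp (-u * rexp (Y ω)) ∂μ : ℝ) : ℂ) = ∫ ω, g u ω ∂μ := by
    intro u
    rw [← integral_complex_ofReal, ← integral_const_mul]
    congr! 3 with ω
    push_cast
    ring_nf
  have hg_int : Integrable (Function.uncurry g) ((volume.restrict (Ioi 0)).prod μ) := by
    have hg_meas : AEStronglyMeasurable (Function.uncurry g) ((volume.restrict (Ioi 0)).prod μ) :=
      (Measurable.mul (by fun_prop) (by fun_prop)).aestronglyMeasurable
    refine (integrable_prod_iff' hg_meas).2 ⟨.of_forall fun ω => ?_, ?_⟩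
    · exact (integrableOn_rpow_mul_exp_neg_mul hξ (Real.exp_pos (Y ω))).mono'
        (by fun_prop : Measurable fun u => g u ω).aestronglyMeasurable
        (ae_restrict_of_forall_mem measurableSet_Ioi fun u hu => (hg_norm ω u hu).le)
    · refine (hint.mul_const (Real.Gamma ξ.re)).congr (.of_forall fun ω => ?_)
      simp only [Function.uncurry_apply_pair]
      rw [setIntegral_congr_fun measurableSet_Ioi (hg_norm ω),
        integral_Ioi_rpow_mul_exp_neg_exp_mul hξ]
  rw [setIntegral_congr_fun measurableSet_Ioi (fun u _ => hg_Ω u), integral_integral_swap hg_int]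
  simp only [g, integral_Ioi_cpow_mul_cexp_neg_exp_mul hξ, integral_mul_const]

/-- For a random variable `Y` with distribution function `F` and
`G(u) = E[exp(-u e^Y)]` for `u > 0`, if `E[e^{-δ Y}] < ∞` and `∫_ℝ e^{-δ y} F(y) dy`
converges, then for `ξ` with `Re ξ = δ > 0`,
`∫_ℝ e^{-ξ y} F(y) dy = (1/Γ(ξ+1)) ∫_0^∞ u^{ξ-1} G(u) du`. -/
theorem transform_from_generating_function
    {Ω : Type*} [MeasurableSpace Ω] (μ : Measure Ω) [IsProbabilityMeasure μ]
    (Y : Ω → ℝ) (hY : Measurable Y)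
    (δ : ℝ) (hδ : 0 < δ) (ξ : ℂ) (hξ : ξ.re = δ)
    (hint : Integrable (fun ω => Real.exp (-δ * Y ω)) μ)
    (hF : Integrable (fun y : ℝ =>
      Real.exp (-δ * y) * (μ {ω | Y ω ≤ y}).toReal)) :
    ∫ y : ℝ, Complex.exp (-ξ * y) * ((μ {ω | Y ω ≤ y}).toReal : ℂ) =
      (1 / Complex.Gamma (ξ + 1)) *
        ∫ u in Ioi (0:ℝ),
          (u : ℂ) ^ (ξ - 1) * ((∫ ω, Real.exp (-u * Real.exp (Y ω)) ∂μ : ℝ) : ℂ) := by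
  subst hξ
  rw [integral_cexp_neg_mul_mul_measureReal_le hY hδ hF,
    integral_Ioi_cpow_mul_integral_exp_neg_mul_exp hY hδ hint,
    Complex.Gamma_add_one ξ (Complex.ne_zero_of_re_pos hδ)]
  have := Complex.Gamma_ne_zero_of_re_pos hδ
  field_simp
end

section
/- Fix α > 0, τ > 0, u > 0 and N ≥ 1. Then lim_{a→α} [ 1/(α-a) - C(a,α) · π u^{α-a}/sin(π(α-a)) ] = (N-1)(Γ'(1+α)/Γ(1+α) - 1/α) - 2γ_E - ατ - log u, where C(a,α) = (α/a · Γ(1+a)/Γ(1+α))^{N-1} · e^{(α²-a²)τ/2}/Γ(1+α-a)². -/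
/-! With `x = α - a` and `g a = C(a,α) u^{α-a}`, the bracket is
`slope g α a + g a (1/x - π/sin(πx))`. Since `|x - sin x| ≤ |x|³/6`, the second summand is `O(x)`,
so the limit is `g'(α)`. Every factor of `g` equals `1` at `α`, so `g'(α)` is the sum of the
factors' derivatives: `(N-1)(Γ'(1+α)/Γ(1+α) - 1/α)` from the Gamma ratio, `-ατ` from the Gaussian
factor, `-2γ_E` from `Γ(1+α-a)⁻²` because `Γ'(1) = -γ_E`, and `-log u` from `u^{α-a}`. -/

open Real Filter Set
open Topology

theorem tendsto_inv_sub_inv_sin_nhdsNE_zero :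
    Tendsto (fun t : ℝ => t⁻¹ - (sin t)⁻¹) (𝓝[≠] 0) (𝓝 0) := by
  have hsinc : Tendsto sinc (𝓝[≠] 0) (𝓝 1) :=
    sinc_zero ▸ continuous_sinc.continuousAt.tendsto.mono_left nhdsWithin_le_nhds
  have hquot : Tendsto (fun t : ℝ => (sin t - t) / t ^ 2) (𝓝[≠] 0) (𝓝 0) := by
    have hbound : Tendsto (fun t : ℝ => |t| / 6) (𝓝[≠] 0) (𝓝 0) := by
      simpa using ((continuous_abs.div_const (6 : ℝ)).tendsto 0).mono_left nhdsWithin_le_nhds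
    refine squeeze_zero_norm' ?_ hbound
    filter_upwards [self_mem_nhdsWithin] with t (ht : t ≠ 0)
    rw [norm_div, norm_pow, Real.norm_eq_abs, abs_sub_comm, div_le_iff₀ (by positivity)]
    calc |t - sin t| ≤ |t| ^ 3 / 6 := abs_sub_sin_le t
      _ = |t| / 6 * |t| ^ 2 := by ring
  have hlim : Tendsto (fun t => (sin t - t) / t ^ 2 / sinc t) (𝓝[≠] 0) (𝓝 0) := by
    have h := hquot.div hsinc one_ne_zero
    rwa [zero_div] at h
  refine hlim.congr' ?_
  filter_upwards [self_mem_nhdsWithin, hsinc.eventually_ne one_ne_zero] with t (ht : t ≠ 0) hs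
  have hsin : sin t ≠ 0 := fun h => hs (by simp [sinc_of_ne_zero ht, h])
  rw [sinc_of_ne_zero ht]
  field_simp

theorem tendsto_one_div_sub_mul_pi_div_sin {g : ℝ → ℝ} {α L : ℝ} (hg : HasDerivAt g L α)
    (hgα : g α = 1) :
    Tendsto (fun a => 1 / (α - a) - g a * (π / sin (π * (α - a)))) (𝓝[≠] α) (𝓝 L) := by
  have hshift : Tendsto (fun a => π * (α - a)) (𝓝[≠] α) (𝓝[≠] 0) := by
    refine tendsto_nhdsWithin_iff.mpr ⟨?_, ?_⟩
    · have h : Continuous fun a => π * (α - a) := by fun_prop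
      simpa using (h.tendsto α).mono_left nhdsWithin_le_nhds
    · filter_upwards [self_mem_nhdsWithin] with a (ha : a ≠ α)
      exact mul_ne_zero pi_ne_zero (sub_ne_zero.mpr ha.symm)
  have hsing : Tendsto (fun a => 1 / (α - a) - π / sin (π * (α - a))) (𝓝[≠] α) (𝓝 0) := by
    have h := (tendsto_inv_sub_inv_sin_nhdsNE_zero.comp hshift).const_mul π
    rw [mul_zero] at h
    refine h.congr' ?_
    filter_upwards [self_mem_nhdsWithin] with a (ha : a ≠ α)
    have : α - a ≠ 0 := sub_ne_zero.mpr ha.symm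
    simp only [Function.comp_apply]
    field_simp
  have hcont : Tendsto g (𝓝[≠] α) (𝓝 1) :=
    hgα ▸ hg.continuousAt.tendsto.mono_left nhdsWithin_le_nhds
  have hlim := (hasDerivAt_iff_tendsto_slope.mp hg).add (hcont.mul hsing)
  rw [one_mul, add_zero] at hlim
  refine hlim.congr' ?_
  filter_upwards [self_mem_nhdsWithin] with a (ha : a ≠ α)
  have : α - a ≠ 0 := sub_ne_zero.mpr ha.symm
  rw [slope_def_field, hgα, ← neg_sub α a, div_neg]
  field_simp
  ring

section NormalizedAtPoint

variable {f g : ℝ → ℝ} {f' g' x : ℝ}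

theorem HasDerivAt.mul_of_eq_one (hf : HasDerivAt f f' x) (hg : HasDerivAt g g' x)
    (hfx : f x = 1) (hgx : g x = 1) : HasDerivAt (fun y => f y * g y) (f' + g') x :=
  (hf.mul hg).congr_deriv (by simp [hfx, hgx])

theorem HasDerivAt.div_of_eq_one (hf : HasDerivAt f f' x) (hg : HasDerivAt g g' x)
    (hfx : f x = 1) (hgx : g x = 1) : HasDerivAt (fun y => f y / g y) (f' - g') x :=
  (hf.div hg (by simp [hgx])).congr_deriv (by simp [hfx, hgx])

theorem HasDerivAt.pow_of_eq_one (hf : HasDerivAt f f' x) (hfx : f x = 1) (n : ℕ) :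
    HasDerivAt (fun y => f y ^ n) (n * f') x :=
  (hf.pow n).congr_deriv (by simp [hfx])

end NormalizedAtPoint

theorem hasDerivAt_div_mul_Gamma_one_add_div {α : ℝ} (hα : -1 < α) (hα0 : α ≠ 0) :
    HasDerivAt (fun a => α / a * (Gamma (1 + a) / Gamma (1 + α)))
      (-(1 / α) + deriv Gamma (1 + α) / Gamma (1 + α)) α := by
  have hΓ : 0 < Gamma (1 + α) := Gamma_pos_of_pos (by linarith)
  have hdiff : DifferentiableAt ℝ Gamma (1 + α) :=
    differentiableAt_Gamma fun m h => by linarith [m.cast_nonneg (α := ℝ)]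
  have hinv : HasDerivAt (fun a => α / a) (-(1 / α)) α := by
    refine ((hasDerivAt_const α α).div (hasDerivAt_id' α) hα0).congr_deriv ?_
    field_simp
    ring
  exact hinv.mul_of_eq_one ((hdiff.hasDerivAt.comp_const_add 1 α).div_const _)
    (div_self hα0) (div_self hΓ.ne')

theorem hasDerivAt_exp_sq_sub_sq_mul_div_two (α τ : ℝ) :
    HasDerivAt (fun a => exp ((α ^ 2 - a ^ 2) * τ / 2)) (-(α * τ)) α := by
  refine ((((hasDerivAt_pow 2 α).const_sub (α ^ 2)).mul_const τ).div_const 2).exp.congr_deriv ?_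
  rw [sub_self, zero_mul, zero_div, exp_zero]
  ring

theorem hasDerivAt_Gamma_one_add_sub (α : ℝ) :
    HasDerivAt (fun a => Gamma (1 + α - a)) eulerMascheroniConstant α := by
  have h : HasDerivAt Gamma (-eulerMascheroniConstant) (1 + α - α) := by
    simpa using hasDerivAt_Gamma_one
  simpa using h.comp_const_sub (1 + α) α

theorem hasDerivAt_rpow_sub {u : ℝ} (hu : 0 < u) (α : ℝ) :
    HasDerivAt (fun a => u ^ (α - a)) (-log u) α := by
  simpa using ((hasDerivAt_id α).const_sub α).const_rpow hu

theorem stationary_limit_cancellation_general (α τ u : ℝ) (hα : 0 < α) (hu : 0 < u)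
    (N : ℕ) (hN : 1 ≤ N) :
    Tendsto
      (fun a : ℝ =>
        1 / (α - a) -
          ((α / a * (Real.Gamma (1 + a) / Real.Gamma (1 + α))) ^ (N - 1) *
              (Real.exp ((α ^ 2 - a ^ 2) * τ / 2) / Real.Gamma (1 + α - a) ^ 2)) *
            (Real.pi * u ^ (α - a) / Real.sin (Real.pi * (α - a))))
      (nhdsWithin α (Iio α))
      (nhds ((N - 1 : ℝ) * (deriv Real.Gamma (1 + α) / Real.Gamma (1 + α) - 1 / α) -
        2 * Real.eulerMascheroniConstant - α * τ - Real.log u)) := by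
  have hΓ : Gamma (1 + α) ≠ 0 := (Gamma_pos_of_pos (by linarith)).ne'
  have hratio := (hasDerivAt_div_mul_Gamma_one_add_div (by linarith) hα.ne').pow_of_eq_one
    (by simp [hα.ne', hΓ]) (N - 1)
  have hgauss := (hasDerivAt_exp_sq_sub_sq_mul_div_two α τ).div_of_eq_one
    ((hasDerivAt_Gamma_one_add_sub α).pow_of_eq_one (by simp) 2) (by simp) (by simp)
  have hweight := (hratio.mul_of_eq_one hgauss (by simp [hα.ne', hΓ]) (by simp)).mul_of_eq_one
    (hasDerivAt_rpow_sub hu α) (by simp [hα.ne', hΓ]) (by simp)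
  have h := (tendsto_one_div_sub_mul_pi_div_sin hweight (by simp [hα.ne', hΓ])).mono_left
    (nhdsLT_le_nhdsNE α)
  convert h using 1
  · funext a
    ring
  · congr 1
    push_cast [Nat.cast_sub hN]
    ring

/-- The key cancellation in the stationary limit:
`lim_{a→α⁻} [ 1/(α-a) - C(a,α) π u^{α-a}/sin(π(α-a)) ]
  = (N-1)(Γ'(1+α)/Γ(1+α) - 1/α) - 2γ_E - ατ - log u`,
with `C(a,α) = (α/a · Γ(1+a)/Γ(1+α))^{N-1} e^{(α²-a²)τ/2}/Γ(1+α-a)²`. -/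
theorem stationary_limit_cancellation (α τ u : ℝ) (hα : 0 < α) (hτ : 0 < τ) (hu : 0 < u)
    (N : ℕ) (hN : 1 ≤ N) :
    Tendsto
      (fun a : ℝ =>
        1 / (α - a) -
          ((α / a * (Real.Gamma (1 + a) / Real.Gamma (1 + α))) ^ (N - 1) *
              (Real.exp ((α ^ 2 - a ^ 2) * τ / 2) / Real.Gamma (1 + α - a) ^ 2)) *
            (Real.pi * u ^ (α - a) / Real.sin (Real.pi * (α - a))))
      (nhdsWithin α (Iio α))
      (nhds ((N - 1 : ℝ) * (deriv Real.Gamma (1 + α) / Real.Gamma (1 + α) - 1 / α) -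
        2 * Real.eulerMascheroniConstant - α * τ - Real.log u)) :=
  stationary_limit_cancellation_general α τ u hα hu N hN
end

section
/- For q = e^{-ε} with ε > 0 and x < 0, define the q-exponential e_q(x) = 1/((1-q)x; q)_∞ = ∏_{k=0}^∞ (1 - (1-q) x q^k)^{-1}. Then lim_{ε → 0+} e_{e^{-ε}}(x) = e^{x}, uniformly for x in (-∞, 0]. -/
/-!
For `x ≤ 0` and `q = e^{-ε} < 1` put `a_k = (1 - q)(-x)q^k ≥ 0`, so that
`e_q(x) = exp (-∑ log (1 + a_k))`. The bounds `t - t²/2 ≤ log (1 + t) ≤ t` for `t ≥ 0`, together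
with `∑ a_k = -x` and `∑ a_k² ≤ (1 - q)x²`, give `e^x ≤ e_q(x) ≤ e^{x + (1 - q)x²}`, which is
uniformly close to `e^x` on every `[-R, 0]`. Below `-R`, monotonicity of `e_q` bounds `e_q(x)` by
`e^{-R + (1 - q)R²}`, which is small once `R` is large and then `q` close to `1`.
-/

open Real Filter Set

/-- The q-exponential `e_q(x) = 1/((1-q)x; q)_∞` with `q = e^{-ε}`. -/
noncomputable def qExp (ε : ℝ) (x : ℝ) : ℝ :=
  (∏' k : ℕ, (1 - (1 - Real.exp (-ε)) * x * Real.exp (-ε) ^ k))⁻¹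

open Topology

section LogOneAdd

lemma log_one_add_le_self {t : ℝ} (ht : -1 < t) : log (1 + t) ≤ t := by
  linarith [log_le_sub_one_of_pos (show 0 < 1 + t by linarith)]

lemma sub_sq_div_two_le_log_one_add {t : ℝ} (ht : 0 ≤ t) : t - t ^ 2 / 2 ≤ log (1 + t) := by
  refine le_trans ?_ (le_log_one_add_of_nonneg ht)
  rw [le_div_iff₀ (by linarith)]
  nlinarith [pow_nonneg ht 3]

variable {ι : Type*} {a b : ι → ℝ}

lemma tprod_one_add_eq_exp_tsum_log (ha : ∀ i, 0 ≤ a i) (hs : Summable a) :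
    ∏' i, (1 + a i) = exp (∑' i, log (1 + a i)) :=
  (rexp_tsum_eq_tprod (fun i => by linarith [ha i]) (summable_log_one_add_of_summable hs)).symm

lemma tsum_log_one_add_le_tsum (ha : ∀ i, 0 ≤ a i) (hs : Summable a) :
    ∑' i, log (1 + a i) ≤ ∑' i, a i :=
  (summable_log_one_add_of_summable hs).tsum_le_tsum
    (fun i => log_one_add_le_self (by linarith [ha i])) hs

lemma tsum_sub_half_tsum_sq_le_tsum_log_one_add (ha : ∀ i, 0 ≤ a i) (hs : Summable a)
    (hs2 : Summable fun i => a i ^ 2) :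
    ∑' i, a i - (∑' i, a i ^ 2) / 2 ≤ ∑' i, log (1 + a i) := by
  rw [← tsum_div_const, ← hs.tsum_sub (hs2.div_const 2)]
  exact (hs.sub (hs2.div_const 2)).tsum_le_tsum
    (fun i => sub_sq_div_two_le_log_one_add (ha i)) (summable_log_one_add_of_summable hs)

lemma tsum_log_one_add_mono (ha : ∀ i, 0 ≤ a i) (hab : ∀ i, a i ≤ b i) (hb : Summable b) :
    ∑' i, log (1 + a i) ≤ ∑' i, log (1 + b i) :=
  (summable_log_one_add_of_summable (hb.of_nonneg_of_le ha hab)).tsum_le_tsum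
    (fun i => log_le_log (by linarith [ha i]) (by linarith [hab i]))
    (summable_log_one_add_of_summable hb)

end LogOneAdd

noncomputable def qExpTerm (ε x : ℝ) (k : ℕ) : ℝ :=
  (1 - exp (-ε)) * -x * exp (-ε) ^ k

namespace qExpTerm

variable {ε x : ℝ}

lemma nonneg (hε : 0 ≤ ε) (hx : x ≤ 0) : 0 ≤ qExpTerm ε x := fun k => by
  have : exp (-ε) ≤ 1 := exp_le_one_iff.mpr (by linarith)
  exact mul_nonneg (mul_nonneg (sub_nonneg.mpr this) (neg_nonneg.mpr hx))
    (pow_nonneg (exp_pos _).le k)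

lemma antitone (hε : 0 ≤ ε) (k : ℕ) : Antitone fun x => qExpTerm ε x k := fun x y hxy => by
  have : exp (-ε) ≤ 1 := exp_le_one_iff.mpr (by linarith)
  simp only [qExpTerm]
  gcongr

lemma hasSum (hε : 0 < ε) : HasSum (qExpTerm ε x) (-x) := by
  have hq : exp (-ε) < 1 := exp_lt_one_iff.mpr (by linarith)
  have h := (hasSum_geometric_of_lt_one (exp_pos _).le hq).mul_left ((1 - exp (-ε)) * -x)
  rwa [mul_right_comm, mul_inv_cancel₀ (sub_pos.mpr hq).ne', one_mul] at h

lemma hasSum_sq (hε : 0 < ε) :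
    HasSum (fun k => qExpTerm ε x k ^ 2) ((1 - exp (-ε)) * x ^ 2 / (1 + exp (-ε))) := by
  set q := exp (-ε)
  have hq : q ^ 2 < 1 := pow_lt_one₀ (exp_pos _).le (exp_lt_one_iff.mpr (by linarith)) two_ne_zero
  have hterm : (fun k => qExpTerm ε x k ^ 2) = fun k => ((1 - q) * -x) ^ 2 * (q ^ 2) ^ k := by
    ext k; simp only [qExpTerm, q]; ring
  rw [hterm]
  have h := (hasSum_geometric_of_lt_one (by positivity) hq).mul_left (((1 - q) * -x) ^ 2)
  have hval : ((1 - q) * -x) ^ 2 * (1 - q ^ 2)⁻¹ = (1 - q) * x ^ 2 / (1 + q) := by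
    have : 1 - q ≠ 0 := by linarith [exp_lt_one_iff.mpr (by linarith : -ε < 0)]
    have : 1 + q ≠ 0 := by positivity
    rw [show 1 - q ^ 2 = (1 - q) * (1 + q) by ring]
    field_simp
  rwa [hval] at h

end qExpTerm

section qExp

variable {ε x : ℝ}

lemma qExp_eq_exp_neg_tsum_log (hε : 0 < ε) (hx : x ≤ 0) :
    qExp ε x = exp (-∑' k, log (1 + qExpTerm ε x k)) := by
  have hprod : ∏' k, (1 - (1 - exp (-ε)) * x * exp (-ε) ^ k) = ∏' k, (1 + qExpTerm ε x k) :=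
    tprod_congr fun k => by simp only [qExpTerm]; ring
  rw [qExp, hprod, tprod_one_add_eq_exp_tsum_log (qExpTerm.nonneg hε.le hx)
    (qExpTerm.hasSum hε).summable, exp_neg]

lemma exp_le_qExp (hε : 0 < ε) (hx : x ≤ 0) : exp x ≤ qExp ε x := by
  rw [qExp_eq_exp_neg_tsum_log hε hx, exp_le_exp, le_neg, ← (qExpTerm.hasSum hε).tsum_eq]
  exact tsum_log_one_add_le_tsum (qExpTerm.nonneg hε.le hx) (qExpTerm.hasSum hε).summable

lemma qExp_le_exp_add_mul_sq (hε : 0 < ε) (hx : x ≤ 0) :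
    qExp ε x ≤ exp (x + (1 - exp (-ε)) * x ^ 2) := by
  rw [qExp_eq_exp_neg_tsum_log hε hx, exp_le_exp]
  have h := tsum_sub_half_tsum_sq_le_tsum_log_one_add (qExpTerm.nonneg hε.le hx)
    (qExpTerm.hasSum hε).summable (qExpTerm.hasSum_sq hε).summable
  rw [(qExpTerm.hasSum hε).tsum_eq, (qExpTerm.hasSum_sq hε).tsum_eq] at h
  have hsq : 0 ≤ (1 - exp (-ε)) * x ^ 2 :=
    mul_nonneg (sub_nonneg.mpr (exp_le_one_iff.mpr (by linarith))) (sq_nonneg x)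
  have : (1 - exp (-ε)) * x ^ 2 / (1 + exp (-ε)) / 2 ≤ (1 - exp (-ε)) * x ^ 2 :=
    (div_le_self (by positivity) one_le_two).trans
      (div_le_self hsq (le_add_of_nonneg_right (exp_pos _).le))
  linarith

lemma qExp_monotoneOn (hε : 0 < ε) : MonotoneOn (qExp ε) (Iic 0) := fun x hx y hy hxy => by
  rw [qExp_eq_exp_neg_tsum_log hε hx, qExp_eq_exp_neg_tsum_log hε hy, exp_le_exp, neg_le_neg_iff]
  exact tsum_log_one_add_mono (qExpTerm.nonneg hε.le hy) (fun k => qExpTerm.antitone hε.le k hxy)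
    (qExpTerm.hasSum hε).summable

lemma qExp_sub_exp_le (hε : 0 < ε) (hx : x ≤ 0) {R : ℝ} (hR : 0 ≤ R) :
    qExp ε x - exp x ≤ exp ((1 - exp (-ε)) * R ^ 2) * (1 + exp (-R)) - 1 := by
  set δ := 1 - exp (-ε)
  have hδ : 0 ≤ δ := sub_nonneg.mpr (exp_le_one_iff.mpr (by linarith))
  have hone : 1 ≤ exp (δ * R ^ 2) := one_le_exp (by positivity)
  rcases le_or_gt (-R) x with hRx | hxR
  · have hx2 : x ^ 2 ≤ R ^ 2 := by nlinarith
    calc qExp ε x - exp x ≤ exp x * (exp (δ * x ^ 2) - 1) := by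
          linarith [exp_add x (δ * x ^ 2), qExp_le_exp_add_mul_sq hε hx]
      _ ≤ 1 * (exp (δ * R ^ 2) - 1) := by
          gcongr
          · linarith [one_le_exp (by positivity : 0 ≤ δ * x ^ 2)]
          · exact exp_le_one_iff.mpr hx
      _ ≤ exp (δ * R ^ 2) * (1 + exp (-R)) - 1 := by nlinarith [exp_pos (-R)]
  · calc qExp ε x - exp x ≤ qExp ε (-R) := by
          linarith [qExp_monotoneOn hε hx (neg_nonpos.mpr hR) hxR.le, exp_pos x]
      _ ≤ exp (-R + δ * (-R) ^ 2) := qExp_le_exp_add_mul_sq hε (neg_nonpos.mpr hR)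
      _ ≤ exp (δ * R ^ 2) * (1 + exp (-R)) - 1 := by
          rw [neg_sq, exp_add]; nlinarith [exp_pos (-R)]

end qExp

/-- As `ε → 0+` (i.e. `q = e^{-ε} → 1⁻`), the q-exponential `e_q(x)` converges to `e^x`,
uniformly for `x ∈ (-∞, 0]`. -/
theorem qExp_tendstoUniformly :
    TendstoUniformlyOn (fun ε : ℝ => fun x : ℝ => qExp ε x) (fun x => Real.exp x)
      (nhdsWithin 0 (Ioi 0)) (Iic 0) := by
  rw [Metric.tendstoUniformlyOn_iff]
  intro η hη
  obtain ⟨R, hRη, hR⟩ : ∃ R, exp (-R) < η ∧ 0 ≤ R :=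
    ((tendsto_exp_neg_atTop_nhds_zero.eventually (gt_mem_nhds hη)).and
      (eventually_ge_atTop 0)).exists
  have hbound : Tendsto (fun ε => exp ((1 - exp (-ε)) * R ^ 2) * (1 + exp (-R)) - 1)
      (𝓝[>] 0) (𝓝 (exp (-R))) := by
    have hcont : Continuous fun ε => exp ((1 - exp (-ε)) * R ^ 2) * (1 + exp (-R)) - 1 := by
      fun_prop
    simpa using (hcont.tendsto 0).mono_left nhdsWithin_le_nhds
  filter_upwards [self_mem_nhdsWithin, hbound.eventually (gt_mem_nhds hRη)] with ε hε hεη x hx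
  rw [dist_eq, abs_sub_comm, abs_of_nonneg (sub_nonneg.mpr (exp_le_qExp hε hx))]
  exact (qExp_sub_exp_le hε hx hR).trans_lt hεη
end
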